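/- For every n ≥ 1 and every k with 0 ≤ k ≤ n, the number of signed permutations b ∈ B_n(21, 2̄1̄) with exactly k descents (i.e., |Des(b)| = k) equals C(n,k)². -/

import Mathlib

/-- A signed permutation of `[n]`: an underlying (absolute-value) permutation
`perm` of `Fin n` (0-based) together with a bar indicator on each position. -/
structure SignedPerm (n : ℕ) where
  perm : Equiv.Perm (Fin n)
  bar : Fin n → Bool

/-- `b` avoids the patterns `21` and `2̄1̄`: there are no positions `i < j`
with `b_i` and `b_j` both barred or both unbarred and `|b_i| > |b_j|`. -/
def AvoidsB {n : ℕ} (b : SignedPerm n) : Prop :=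
  ∀ i j : Fin n, i < j → b.bar i = b.bar j → ¬ b.perm j < b.perm i

/-- The rank of the symbol in position `i` of `b` with respect to the total
order `1 < 2 < ⋯ < n < n̄ < ⋯ < 2̄ < 1̄` (0-based: an unbarred value `v` has
rank `v`, a barred value `v` has rank `2n - 1 - v`). -/
def symbKey {n : ℕ} (b : SignedPerm n) (i : Fin n) : ℕ :=
  if b.bar i then 2 * n - 1 - (b.perm i : ℕ) else (b.perm i : ℕ)

/-- The descent set of a signed permutation, as a set of 1-based positions in
`[n]`: `i ∈ [n-1]` is a descent iff `b_i > b_{i+1}` in the order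
`1 < ⋯ < n < n̄ < ⋯ < 1̄`, and `n` is a descent iff `b_n` is barred. -/
def DesB {n : ℕ} (b : SignedPerm n) : Set ℕ :=
  {i | (∃ h : 1 ≤ i ∧ i < n,
          symbKey b ⟨i, h.2⟩ <
            symbKey b ⟨i - 1, Nat.lt_of_le_of_lt (Nat.sub_le i 1) h.2⟩)
    ∨ (∃ h : 0 < n, i = n ∧ b.bar ⟨n - 1, Nat.sub_lt h Nat.one_pos⟩ = true)}

/-!
In a `(21, 2̄1̄)`-avoiding signed permutation the barred entries, and likewise the unbarred ones,
appear in increasing order of absolute value. Such a permutation is therefore determined by the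
set `S` of barred positions and the set `T` of barred values, and every pair with `|S| = |T|`
occurs. Moreover `b_i > b_{i+1}` holds exactly when `b_i` is barred, so the descents are the
positions of the barred entries and those with `k` descents correspond to pairs of `k`-subsets
of `[n]`.
-/

noncomputable def OrderIso.ofCardEq (β γ : Type*) [LinearOrder β] [Fintype β]
    [LinearOrder γ] [Fintype γ] (h : Fintype.card β = Fintype.card γ) : β ≃o γ :=
  (Fintype.orderIsoFinOfCardEq β h).symm.trans (Fintype.orderIsoFinOfCardEq γ rfl)

theorem StrictMonoOn.eqOn_of_image_eq {α β : Type*} [LinearOrder α] [Preorder β] {s : Set α}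
    (hs : s.Finite) {f g : α → β} (hf : StrictMonoOn f s) (hg : StrictMonoOn g s)
    (h : f '' s = g '' s) : s.EqOn f g := by
  have : Finite s := hs.to_subtype
  have hfg := (hf.domRestrict.range_inj hg.domRestrict).1 (by
    rwa [Set.range_domRestrict, Set.range_domRestrict])
  exact fun x hx => congrFun hfg ⟨x, hx⟩

namespace Equiv.Perm

variable {α : Type*} [LinearOrder α] [Fintype α]

theorem eq_of_strictMonoOn_of_map_eq {S : Finset α} {p q : Perm α}
    (hpS : StrictMonoOn p S) (hpSc : StrictMonoOn p ↑Sᶜ)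
    (hqS : StrictMonoOn q S) (hqSc : StrictMonoOn q ↑Sᶜ)
    (h : S.map p.toEmbedding = S.map q.toEmbedding) : p = q := by
  have himage : p '' S = q '' S := by
    simpa only [Finset.coe_map, Equiv.coe_toEmbedding] using
      congrArg ((↑) : Finset α → Set α) h
  have hS := hpS.eqOn_of_image_eq S.finite_toSet hqS himage
  have hSc := hpSc.eqOn_of_image_eq (Finset.finite_toSet _) hqSc (by
    rw [Finset.coe_compl, p.image_compl, q.image_compl, himage])
  ext a
  by_cases ha : a ∈ S
  · exact hS ha
  · exact hSc (by simpa using ha)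

theorem exists_strictMonoOn_map_eq (S T : Finset α) (h : S.card = T.card) :
    ∃ p : Perm α, StrictMonoOn p S ∧ StrictMonoOn p ↑Sᶜ ∧ S.map p.toEmbedding = T := by
  let e₁ := OrderIso.ofCardEq {a // a ∈ S} {a // a ∈ T} (by simpa using h)
  let e₂ := OrderIso.ofCardEq {a // a ∉ S} {a // a ∉ T} (by
    simp only [Fintype.card_subtype_compl, Fintype.card_coe, h])
  let p : Perm α := (Equiv.sumCompl (· ∈ S)).symm.trans
    ((e₁.toEquiv.sumCongr e₂.toEquiv).trans (Equiv.sumCompl (· ∈ T)))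
  have hp₁ : ∀ a (ha : a ∈ S), p a = e₁ ⟨a, ha⟩ := fun a ha => by
    simp [p, Equiv.sumCompl_symm_apply_of_pos ha]
  have hp₂ : ∀ a (ha : a ∉ S), p a = e₂ ⟨a, ha⟩ := fun a ha => by
    simp [p, Equiv.sumCompl_symm_apply_of_neg ha]
  refine ⟨p, fun a ha b hb hab => ?_, fun a ha b hb hab => ?_, ?_⟩
  · rw [hp₁ a ha, hp₁ b hb]
    exact e₁.strictMono (Subtype.mk_lt_mk.2 hab)
  · simp only [Finset.coe_compl, Set.mem_compl_iff, Finset.mem_coe] at ha hb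
    rw [hp₂ a ha, hp₂ b hb]
    exact e₂.strictMono (Subtype.mk_lt_mk.2 hab)
  · have hmem : ∀ a, p a ∈ T ↔ a ∈ S := fun a => by
      by_cases ha : a ∈ S
      · simp [hp₁ a ha, ha]
      · simpa [hp₂ a ha, ha] using (e₂ ⟨a, ha⟩).2
    ext t
    rw [Finset.mem_map_equiv, ← hmem, apply_symm_apply]

end Equiv.Perm

namespace SignedPerm

variable {n : ℕ}

def barred (b : SignedPerm n) : Finset (Fin n) :=
  Finset.univ.filter fun i => b.bar i = true

theorem mem_barred {b : SignedPerm n} {i : Fin n} : i ∈ b.barred ↔ b.bar i = true := by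
  simp [barred]

theorem avoidsB_iff {b : SignedPerm n} :
    AvoidsB b ↔ ∀ i j, i < j → b.bar i = b.bar j → b.perm i < b.perm j := by
  refine forall₄_congr fun i j hij _ => ?_
  rw [not_lt, le_iff_lt_or_eq, or_iff_left (b.perm.injective.ne hij.ne)]

theorem avoidsB_iff_strictMonoOn {b : SignedPerm n} :
    AvoidsB b ↔ StrictMonoOn b.perm b.barred ∧ StrictMonoOn b.perm ↑b.barredᶜ := by
  simp only [avoidsB_iff, StrictMonoOn, Finset.coe_compl, Set.mem_compl_iff, Finset.mem_coe,
    mem_barred, Bool.not_eq_true]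
  refine ⟨fun h => ⟨fun i hi j hj hij => h i j hij (hi.trans hj.symm),
    fun i hi j hj hij => h i j hij (hi.trans hj.symm)⟩, fun ⟨h₁, h₂⟩ i j hij hb => ?_⟩
  cases hi : b.bar i
  · exact h₂ hi (hb ▸ hi) hij
  · exact h₁ hi (hb ▸ hi) hij

theorem symbKey_lt_symbKey_iff {b : SignedPerm n} (hb : AvoidsB b) {i j : Fin n} (hij : i < j) :
    symbKey b j < symbKey b i ↔ b.bar i = true := by
  have hi := (b.perm i).isLt
  have hj := (b.perm j).isLt
  have hmono : b.bar i = b.bar j → (b.perm i : ℕ) < b.perm j := avoidsB_iff.1 hb i j hij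
  cases hbi : b.bar i <;> cases hbj : b.bar j <;>
    simp only [hbi, hbj, symbKey, Bool.false_eq_true, Bool.true_eq_false, ↓reduceIte,
      forall_const, IsEmpty.forall_iff, iff_true, iff_false, not_lt] at hmono ⊢ <;> omega

theorem desB_eq {b : SignedPerm n} (hb : AvoidsB b) :
    DesB b = (fun i : Fin n => (i : ℕ) + 1) '' {i | b.bar i = true} := by
  ext m
  simp only [DesB, Set.mem_ofPred_eq, Set.mem_image]
  constructor
  · rintro (⟨⟨hm, hmn⟩, hkey⟩ | ⟨hn, hm, hbar⟩)
    · have hlt : (⟨m - 1, by omega⟩ : Fin n) < ⟨m, hmn⟩ := Fin.mk_lt_mk.2 (by omega)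
      refine ⟨⟨m - 1, by omega⟩, (symbKey_lt_symbKey_iff hb hlt).1 hkey, ?_⟩
      dsimp only
      omega
    · exact ⟨⟨n - 1, by omega⟩, hbar, by dsimp only; omega⟩
  · rintro ⟨i, hbar, rfl⟩
    rcases (Nat.add_one_le_of_lt i.isLt).lt_or_eq with hin | hin
    · refine .inl ⟨⟨by omega, hin⟩, (symbKey_lt_symbKey_iff hb (Fin.mk_lt_mk.2 ?_)).2 ?_⟩
      · simp
      · simpa using hbar
    · refine .inr ⟨by omega, hin, ?_⟩
      simpa [← hin] using hbar

theorem ncard_desB {b : SignedPerm n} (hb : AvoidsB b) : (DesB b).ncard = b.barred.card := by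
  rw [desB_eq hb, Set.ncard_image_of_injective _ (fun i j h => Fin.ext (by simpa using h)),
    ← Set.ncard_coe_finset]
  simp [barred]

theorem eq_of_barred_eq_of_map_eq {b b' : SignedPerm n} (hb : AvoidsB b) (hb' : AvoidsB b')
    (hS : b.barred = b'.barred)
    (hT : b.barred.map b.perm.toEmbedding = b'.barred.map b'.perm.toEmbedding) : b = b' := by
  obtain ⟨hbS, hbSc⟩ := avoidsB_iff_strictMonoOn.1 hb
  obtain ⟨hbS', hbSc'⟩ := avoidsB_iff_strictMonoOn.1 hb'
  rw [← hS] at hbS' hbSc' hT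
  have hbar : b.bar = b'.bar := funext fun i =>
    Bool.eq_iff_iff.2 (by simpa only [mem_barred] using Finset.ext_iff.1 hS i)
  have hperm := Equiv.Perm.eq_of_strictMonoOn_of_map_eq hbS hbSc hbS' hbSc' hT
  cases b; cases b'
  congr

theorem exists_avoidsB (S T : Finset (Fin n)) (h : S.card = T.card) :
    ∃ b : SignedPerm n, AvoidsB b ∧ b.barred = S ∧ b.barred.map b.perm.toEmbedding = T := by
  obtain ⟨p, hpS, hpSc, hpT⟩ := Equiv.Perm.exists_strictMonoOn_map_eq S T h
  have hS : (⟨p, fun i => decide (i ∈ S)⟩ : SignedPerm n).barred = S := by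
    ext i
    exact mem_barred.trans decide_eq_true_iff
  refine ⟨_, avoidsB_iff_strictMonoOn.2 ?_, hS, by rw [hS, hpT]⟩
  rw [hS]
  exact ⟨hpS, hpSc⟩

end SignedPerm

theorem stmt15_general (n k : ℕ) :
    Nat.card {b : SignedPerm n // AvoidsB b ∧ (DesB b).ncard = k} =
      n.choose k ^ 2 := by
  let F : {b : SignedPerm n // AvoidsB b ∧ (DesB b).ncard = k} →
      {S : Finset (Fin n) // S.card = k} × {T : Finset (Fin n) // T.card = k} := fun b =>
    (⟨b.1.barred, by rw [← SignedPerm.ncard_desB b.2.1, b.2.2]⟩,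
     ⟨b.1.barred.map b.1.perm.toEmbedding, by
        rw [Finset.card_map, ← SignedPerm.ncard_desB b.2.1, b.2.2]⟩)
  have hF : F.Bijective := by
    refine ⟨fun b b' h => ?_, fun ⟨⟨S, hS⟩, ⟨T, hT⟩⟩ => ?_⟩
    · simp only [F, Prod.mk.injEq, Subtype.mk.injEq] at h
      exact Subtype.ext (SignedPerm.eq_of_barred_eq_of_map_eq b.2.1 b'.2.1 h.1 h.2)
    · obtain ⟨b, hb, hbS, hbT⟩ := SignedPerm.exists_avoidsB S T (hS.trans hT.symm)
      exact ⟨⟨b, hb, by rw [SignedPerm.ncard_desB hb, hbS, hS]⟩,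
        Prod.ext (Subtype.ext hbS) (Subtype.ext hbT)⟩
  rw [Nat.card_eq_of_bijective F hF, Nat.card_prod, Nat.card_eq_fintype_card,
    Fintype.card_finset_len, Fintype.card_fin, sq]

/-- The number of `(21, 2̄1̄)`-avoiding signed permutations of `[n]` with
exactly `k` descents equals `C(n,k)²`. -/
theorem stmt15 (n k : ℕ) (hn : 1 ≤ n) (hk : k ≤ n) :
    Nat.card {b : SignedPerm n // AvoidsB b ∧ (DesB b).ncard = k} =
      n.choose k ^ 2 :=
  stmt15_general n k
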